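/- arXiv:2501.15061 — 3 statements merged into one kernel-verified Lean document; each statement's English description precedes it below -/
import Mathlib

section
/- The function h(x) = log(x+1) − (x/(x+1))·log(x) is strictly decreasing on (1, ∞). -/
/-! On differentiating, the term `1 / (x + 1)` coming from `log (x + 1)` cancels against
`x / (x + 1) * (log x)' = 1 / (x + 1)`, leaving `-log x / (x + 1) ^ 2`, which is negative for `x > 1`. -/

open Real

theorem hasDerivAt_log_add_one_sub_div_add_one_mul_log {x : ℝ} (hx : 0 < x) :
    HasDerivAt (fun x : ℝ => log (x + 1) - x / (x + 1) * log x)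
      (-(log x / (x + 1) ^ 2)) x := by
  have hx1 : x + 1 ≠ 0 := by positivity
  have hlog_add_one : HasDerivAt (fun x : ℝ => log (x + 1)) (x + 1)⁻¹ x :=
    ((hasDerivAt_id x).add_const 1).log hx1 |>.congr_deriv (one_div _)
  have hratio : HasDerivAt (fun x : ℝ => x / (x + 1)) ((1 * (x + 1) - x * 1) / (x + 1) ^ 2) x :=
    (hasDerivAt_id x).div ((hasDerivAt_id x).add_const 1) hx1
  refine (hlog_add_one.sub (hratio.mul (hasDerivAt_log hx.ne'))).congr_deriv ?_
  field_simp
  ring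

theorem h_strictAntiOn :
    StrictAntiOn (fun x : ℝ => Real.log (x + 1) - (x / (x + 1)) * Real.log x)
      (Set.Ioi 1) := by
  have hderiv : ∀ x ∈ Set.Ioi (1 : ℝ), HasDerivAt _ _ x := fun x hx =>
    hasDerivAt_log_add_one_sub_div_add_one_mul_log (zero_lt_one.trans hx)
  refine strictAntiOn_of_hasDerivWithinAt_neg (convex_Ioi 1) (HasDerivAt.continuousOn hderiv)
    (f' := fun x => -(log x / (x + 1) ^ 2)) ?_ fun x hx => ?_ <;> rw [interior_Ioi] at *
  · exact fun x hx => (hderiv x hx).hasDerivWithinAt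
  · have hx0 : 0 < x := zero_lt_one.trans hx
    have hlog : 0 < log x := log_pos hx
    exact neg_neg_of_pos (by positivity)
end

section
/- For p > 1 and a > b > 0, the power map g(x) = x^p satisfies PSE(a^p, b^p) < PSE(a, b), where PSE(x,y) = −(x/(x+y))log(x/(x+y)) − (y/(x+y))log(y/(x+y)). -/
/-!
Both sides are the binary entropy of the larger share: `a / (a + b)` on the right and
`a ^ p / (a ^ p + b ^ p)` on the left. That share exceeds `1 / 2`, and raising to the power
`p > 1` makes it strictly larger, since it equals `(1 + r)⁻¹` with `r = b / a < 1` replaced by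
`r ^ p < r`. Binary entropy is strictly decreasing on `[1 / 2, 1]`.
-/

open Real Set

lemma binEntropy_div_add {a b : ℝ} (hab : a + b ≠ 0) :
    binEntropy (a / (a + b)) =
      -(a / (a + b) * log (a / (a + b))) - b / (a + b) * log (b / (a + b)) := by
  have hshare : 1 - a / (a + b) = b / (a + b) := by field_simp; ring
  rw [binEntropy_eq_negMulLog_add_negMulLog_one_sub, hshare, negMulLog, negMulLog]
  ring

lemma div_add_mem_Icc_half_one {a b : ℝ} (hb : 0 < b) (hab : b < a) :
    a / (a + b) ∈ Icc 2⁻¹ 1 := by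
  have hs : 0 < a + b := by linarith
  constructor
  · rw [le_div_iff₀ hs]; linarith
  · rw [div_le_one hs]; linarith

lemma div_add_eq_inv_one_add_div {a b : ℝ} (ha : a ≠ 0) : a / (a + b) = (1 + b / a)⁻¹ := by
  field_simp

lemma div_add_lt_rpow_div_add_rpow {p a b : ℝ} (hp : 1 < p) (hb : 0 < b) (hab : b < a) :
    a / (a + b) < a ^ p / (a ^ p + b ^ p) := by
  have ha : 0 < a := hb.trans hab
  have hr : 0 < b / a := div_pos hb ha
  rw [div_add_eq_inv_one_add_div ha.ne', div_add_eq_inv_one_add_div (rpow_pos_of_pos ha p).ne',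
    ← div_rpow hb.le ha.le]
  gcongr
  exact rpow_lt_self_of_lt_one hr ((div_lt_one ha).2 hab) hp

theorem PSE_pow_lt (p a b : ℝ) (hp : 1 < p) (hb : 0 < b) (hab : b < a) :
    -((a ^ p / (a ^ p + b ^ p)) * Real.log (a ^ p / (a ^ p + b ^ p)))
      - (b ^ p / (a ^ p + b ^ p)) * Real.log (b ^ p / (a ^ p + b ^ p))
    < -((a / (a + b)) * Real.log (a / (a + b)))
      - (b / (a + b)) * Real.log (b / (a + b)) := by
  have hbp : 0 < b ^ p := rpow_pos_of_pos hb p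
  have hbap : b ^ p < a ^ p := rpow_lt_rpow hb.le hab (by linarith)
  rw [← binEntropy_div_add (by linarith : 0 < a ^ p + b ^ p).ne',
    ← binEntropy_div_add (by linarith : 0 < a + b).ne']
  exact binEntropy_strictAntiOn (div_add_mem_Icc_half_one hb hab)
    (div_add_mem_Icc_half_one hbp hbap) (div_add_lt_rpow_div_add_rpow hp hb hab)
end

section
/- Let x = (x₁,…,x_N) be positive reals and p > 1. Then PSE(x₁^p,…,x_N^p) ≤ PSE(x₁,…,x_N), where PSE(x) = −Σᵢ (xᵢ/s)log(xᵢ/s) with s = Σᵢ xᵢ. -/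
open Finset Real

lemma double_sum_identity {ι : Type*} (s : Finset ι) (b g l : ι → ℝ) :
    ∑ i ∈ s, ∑ j ∈ s, b i * b j * ((g i - g j) * (l i - l j))
    = 2 * ((∑ j ∈ s, b j) * (∑ i ∈ s, b i * (g i * l i))
        - (∑ j ∈ s, b j * g j) * (∑ i ∈ s, b i * l i)) := by
  have h : ∀ i j, b i * b j * ((g i - g j) * (l i - l j)) =
      (b i * (g i * l i)) * b j - (b i * g i) * (b j * l j)
        - (b i * l i) * (b j * g j) + b i * (b j * (g j * l j)) := by
    intros; ring
  simp_rw [h, Finset.sum_add_distrib, Finset.sum_sub_distrib, ← Finset.mul_sum,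
    ← Finset.sum_mul]
  ring

lemma cheb {ι : Type*} (s : Finset ι) (b g l : ι → ℝ) (hb : ∀ i ∈ s, 0 ≤ b i)
    (hmono : ∀ i ∈ s, ∀ j ∈ s, 0 ≤ (g i - g j) * (l i - l j)) :
    (∑ j ∈ s, b j * g j) * (∑ i ∈ s, b i * l i)
      ≤ (∑ j ∈ s, b j) * (∑ i ∈ s, b i * (g i * l i)) := by
  have h0 : 0 ≤ ∑ i ∈ s, ∑ j ∈ s, b i * b j * ((g i - g j) * (l i - l j)) := by
    refine Finset.sum_nonneg fun i hi => Finset.sum_nonneg fun j hj => ?_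
    exact mul_nonneg (mul_nonneg (hb i hi) (hb j hj)) (hmono i hi j hj)
  rw [double_sum_identity] at h0
  linarith

noncomputable def PSE {N : ℕ} (x : Fin N → ℝ) : ℝ :=
  -∑ i, (x i / ∑ j, x j) * Real.log (x i / ∑ j, x j)

theorem PSE_pow_le {N : ℕ} (x : Fin N → ℝ) (hx : ∀ i, 0 < x i) (p : ℝ) (hp : 1 < p) :
    PSE (fun i => x i ^ p) ≤ PSE x := by
  rcases Nat.eq_zero_or_pos N with hN | hN
  · subst hN; simp [PSE]
  have : Nonempty (Fin N) := ⟨⟨0, hN⟩⟩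
  set s0 : ℝ := ∑ j, x j with hs0def
  set S : ℝ := ∑ j, x j ^ p with hSdef
  have hs : 0 < s0 := Finset.sum_pos (fun i _ => hx i) Finset.univ_nonempty
  have hS : 0 < S := Finset.sum_pos (fun i _ => Real.rpow_pos_of_pos (hx i) p) Finset.univ_nonempty
  set a : Fin N → ℝ := fun i => x i ^ p / S with hadef
  set b : Fin N → ℝ := fun i => x i / s0 with hbdef
  have ha : ∀ i, 0 < a i := fun i => div_pos (Real.rpow_pos_of_pos (hx i) p) hS
  have hb : ∀ i, 0 < b i := fun i => div_pos (hx i) hs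
  have hsa : ∑ i, a i = 1 := by
    rw [hadef, ← Finset.sum_div, ← hSdef, div_self hS.ne']
  have hsb : ∑ i, b i = 1 := by
    rw [hbdef, ← Finset.sum_div, ← hs0def, div_self hs.ne']
  have hgoal : PSE (fun i => x i ^ p) = -∑ i, a i * Real.log (a i) := rfl
  have hgoal2 : PSE x = -∑ i, b i * Real.log (b i) := rfl
  rw [hgoal, hgoal2]
  -- Step A (Gibbs): ∑ a log b ≤ ∑ a log a
  have stepA : ∑ i, a i * Real.log (b i) ≤ ∑ i, a i * Real.log (a i) := by
    have key : ∑ i, (a i * Real.log (b i) - a i * Real.log (a i)) ≤ 0 := by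
      calc ∑ i, (a i * Real.log (b i) - a i * Real.log (a i))
          = ∑ i, a i * Real.log (b i / a i) := by
            refine Finset.sum_congr rfl fun i _ => ?_
            rw [Real.log_div (hb i).ne' (ha i).ne']; ring
        _ ≤ ∑ i, a i * (b i / a i - 1) := by
            refine Finset.sum_le_sum fun i _ => ?_
            exact mul_le_mul_of_nonneg_left
              (Real.log_le_sub_one_of_pos (div_pos (hb i) (ha i))) (ha i).le
        _ = ∑ i, (b i - a i) := by
            refine Finset.sum_congr rfl fun i _ => ?_
            rw [mul_sub, mul_one, mul_div_cancel₀ _ (ha i).ne']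
        _ = 0 := by rw [Finset.sum_sub_distrib, hsa, hsb, sub_self]
    rw [Finset.sum_sub_distrib] at key
    linarith
  -- Step B (Chebyshev): ∑ b log b ≤ ∑ a log b
  have stepB : ∑ i, b i * Real.log (b i) ≤ ∑ i, a i * Real.log (b i) := by
    have hlog : ∀ i, Real.log (b i) = Real.log (x i) - Real.log s0 := fun i =>
      Real.log_div (hx i).ne' hs.ne'
    have hsumb : ∑ i, b i * Real.log (b i)
        = (∑ i, x i * Real.log (x i)) / s0 - Real.log s0 := by
      simp_rw [hlog, mul_sub, Finset.sum_sub_distrib, ← Finset.sum_mul, hsb, one_mul,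
        hbdef, div_mul_eq_mul_div, ← Finset.sum_div]
    have hsuma : ∑ i, a i * Real.log (b i)
        = (∑ i, x i ^ p * Real.log (x i)) / S - Real.log s0 := by
      simp_rw [hlog, mul_sub, Finset.sum_sub_distrib, ← Finset.sum_mul, hsa, one_mul,
        hadef, div_mul_eq_mul_div, ← Finset.sum_div]
    rw [hsumb, hsuma]
    have hmain : (∑ i, x i * Real.log (x i)) / s0 ≤ (∑ i, x i ^ p * Real.log (x i)) / S := by
      rw [div_le_div_iff₀ hs hS]
      have hch := cheb Finset.univ x (fun i => x i ^ (p - 1)) (fun i => Real.log (x i))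
        (fun i _ => (hx i).le) ?_
      · have hpow : ∀ i, x i * x i ^ (p - 1) = x i ^ p := by
          intro i
          have h := (Real.rpow_add (hx i) 1 (p - 1)).symm
          rw [Real.rpow_one] at h
          calc x i * x i ^ (p - 1) = x i ^ ((1 : ℝ) + (p - 1)) := h
            _ = x i ^ p := by norm_num
        have hpow2 : ∀ i, x i * (x i ^ (p - 1) * Real.log (x i)) = x i ^ p * Real.log (x i) := by
          intro i; rw [← mul_assoc, hpow i]
        simp_rw [hpow, hpow2] at hch
        calc (∑ i, x i * Real.log (x i)) * S = S * ∑ i, x i * Real.log (x i) := by ring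
          _ ≤ s0 * ∑ i, x i ^ p * Real.log (x i) := hch
          _ = (∑ i, x i ^ p * Real.log (x i)) * s0 := by ring
      · intro i _ j _
        rcases le_total (x i) (x j) with hle | hle
        · have h1 : x i ^ (p - 1) ≤ x j ^ (p - 1) :=
            Real.rpow_le_rpow (hx i).le hle (by linarith)
          have h2 : Real.log (x i) ≤ Real.log (x j) := Real.log_le_log (hx i) hle
          nlinarith
        · have h1 : x j ^ (p - 1) ≤ x i ^ (p - 1) :=
            Real.rpow_le_rpow (hx j).le hle (by linarith)
          have h2 : Real.log (x j) ≤ Real.log (x i) := Real.log_le_log (hx j) hle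
          nlinarith
    linarith
  linarith
end
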